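/- Let p, q, y_I, y_M be real numbers with 0 ≤ p < 1 and 0 ≤ q < 1, and let a(n) = (P_b^n)₁₁·y_I + (P_b^n)₁₂·y_M. Then the series Σ_{n=0}^∞ a(n) converges and equals y_I/(1−p) + y_M/(1−q). -/

import Mathlib

open Matrix

noncomputable def Pb (p q : ℝ) : Matrix (Fin 3) (Fin 3) ℝ :=
  !![p, 1 - p, 0; 0, q, 1 - q; 0, 0, 1]

open Finset

/-! Since `Pb p q` is upper triangular, `(Pb p q ^ n) 0 0 = p ^ n`, and the entry `(Pb p q ^ n) 0 1`
satisfies `x (n + 1) = q * x n + (1 - p) * p ^ n`, whose solution is `(1 - p)` times the two-variable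
geometric sum `∑ i < n, p ^ i * q ^ (n - 1 - i)`. Summed over `n`, these sums form the Cauchy product
of the geometric series of `p` and `q`, which gives `(1 - p)⁻¹ * (1 - q)⁻¹`. -/

theorem hasSum_geom_sum₂_of_norm_lt_one {K : Type*} [NormedDivisionRing K] {x y : K}
    (hx : ‖x‖ < 1) (hy : ‖y‖ < 1) :
    HasSum (fun n ↦ ∑ i ∈ range n, x ^ i * y ^ (n - 1 - i)) ((1 - x)⁻¹ * (1 - y)⁻¹) := by
  have hcauchy := hasSum_sum_range_mul_of_summable_norm'
    (summable_norm_geometric_of_norm_lt_one hx) (hasSum_geometric_of_norm_lt_one hx).summable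
    (summable_norm_geometric_of_norm_lt_one hy) (hasSum_geometric_of_norm_lt_one hy).summable
  rw [tsum_geometric_of_norm_lt_one hx, tsum_geometric_of_norm_lt_one hy] at hcauchy
  refine (hasSum_nat_add_iff' 1).1 ?_
  simpa using hcauchy

theorem Pb_pow_apply_zero_zero (p q : ℝ) (n : ℕ) : (Pb p q ^ n) 0 0 = p ^ n := by
  induction n with
  | zero => simp
  | succ n ih =>
    rw [pow_succ, mul_apply, Fin.sum_univ_three, ih]
    simp [Pb, pow_succ]

theorem Pb_pow_apply_zero_one (p q : ℝ) (n : ℕ) :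
    (Pb p q ^ n) 0 1 = (1 - p) * ∑ i ∈ range n, p ^ i * q ^ (n - 1 - i) := by
  induction n with
  | zero => simp
  | succ n ih =>
    rw [pow_succ, mul_apply, Fin.sum_univ_three, Pb_pow_apply_zero_zero, ih, Nat.add_sub_cancel,
      geom_sum₂_succ_eq]
    simp only [Pb, Fin.isValue, of_apply, cons_val', cons_val_one, cons_val_zero, cons_val_fin_one,
      Matrix.cons_val, mul_zero, add_zero]
    ring

theorem stmt_5 (p q yI yM : ℝ) (hp0 : 0 ≤ p) (hp1 : p < 1) (hq0 : 0 ≤ q) (hq1 : q < 1)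
    (a : ℕ → ℝ) (ha : ∀ n, a n = (Pb p q ^ n) 0 0 * yI + (Pb p q ^ n) 0 1 * yM) :
    HasSum a (yI / (1 - p) + yM / (1 - q)) := by
  have hp : ‖p‖ < 1 := abs_lt.2 ⟨by linarith, hp1⟩
  have hq : ‖q‖ < 1 := abs_lt.2 ⟨by linarith, hq1⟩
  have hp' : 1 - p ≠ 0 := by linarith
  have hentry01 := (hasSum_geom_sum₂_of_norm_lt_one hp hq).mul_left (1 - p)
  rw [mul_inv_cancel_left₀ hp'] at hentry01
  simp only [div_eq_inv_mul]
  refine (((hasSum_geometric_of_norm_lt_one hp).mul_right yI).add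
    (hentry01.mul_right yM)).congr_fun fun n ↦ ?_
  rw [ha, Pb_pow_apply_zero_zero, Pb_pow_apply_zero_one]
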